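/- arXiv:2307.03997 — 5 statements merged into one kernel-verified Lean document; each statement's English description precedes it below -/
import Mathlib

section
/- Fix h ∈ [H−1] in a finite low-rank MDP of dimension d that satisfies η-reachability at layer h+1, i.e. max_{π∈Π} d^π(x) ≥ η·‖μ*_{h+1}(x)‖₂ for every x ∈ X_{h+1}, for some η > 0. Let C > 0 and ε ∈ [0, η/2], and let π_1, …, π_d ∈ Π be policies such that {E^{π_1}[φ*_h(x_h, a_h)], …, E^{π_d}[φ*_h(x_h, a_h)]} is a (C, ε)-approximate barycentric spanner of the set {E^π[φ*_h(x_h, a_h)] : π ∈ Π}. Then Ψ := {π_1, …, π_d} is a (1/(2dC), 0)-policy cover for layer h+1: for every x ∈ X_{h+1}, max_{i∈[d]} d^{π_i}(x) ≥ (1/(2dC)) · max_{π∈Π} d^π(x). -/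
open scoped BigOperators RealInnerProductSpace

universe u v

variable {X : ℕ → Type u} {A : Type v} [∀ k, Fintype (X k)] [Fintype A]

/-- Layers are 0-indexed: Lean layer `k` corresponds to the paper's layer `k + 1`.
`occ ρ T π k x = P^π[x_{k+1} = x]` is the state occupancy measure of the policy `π`. -/
noncomputable def occ (ρ : X 0 → ℝ) (T : ∀ k, X k → A → X (k + 1) → ℝ)
    (π : ∀ k, X k → A → ℝ) : ∀ k, X k → ℝ
  | 0, x => ρ x
  | k + 1, x' => ∑ x : X k, ∑ a : A, occ ρ T π k x * π k x a * T k x a x'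

/-- A Markov policy: a probability distribution over actions at every state. -/
def IsPolicy (π : ∀ k, X k → A → ℝ) : Prop :=
  ∀ (k : ℕ) (x : X k), (∀ a, 0 ≤ π k x a) ∧ (∑ a : A, π k x a = 1)

/-- An initial state distribution. -/
def IsInit (ρ : X 0 → ℝ) : Prop :=
  (∀ x, 0 ≤ ρ x) ∧ (∑ x : X 0, ρ x = 1)

/-- `E^π[φ_h(x_h, a_h)]`, the expected feature vector at layer `h` under policy `π`. -/
noncomputable def featMean (d : ℕ) (ρ : X 0 → ℝ)
    (T : ∀ k, X k → A → X (k + 1) → ℝ) (φ : ∀ k, X k → A → EuclideanSpace ℝ (Fin d))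
    (π : ∀ k, X k → A → ℝ) (h : ℕ) : EuclideanSpace ℝ (Fin d) :=
  ∑ x : X h, ∑ a : A, (occ ρ T π h x * π h x a) • φ h x a

lemma occ_nonneg' (ρ : X 0 → ℝ) (hρ : ∀ x, 0 ≤ ρ x) (T : ∀ k, X k → A → X (k+1) → ℝ)
    (π : ∀ k, X k → A → ℝ) (hπ : ∀ k (x : X k) a, 0 ≤ π k x a) :
    ∀ k, (∀ j, j < k → ∀ (x : X j) (a : A) (x' : X (j+1)), 0 ≤ T j x a x') →
      ∀ x, 0 ≤ occ ρ T π k x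
  | 0, _, x => hρ x
  | k + 1, hT, x' => by
    apply Finset.sum_nonneg; intro x _
    apply Finset.sum_nonneg; intro a _
    exact mul_nonneg (mul_nonneg
      (occ_nonneg' ρ hρ T π hπ k (fun j hj => hT j (Nat.lt_succ_of_lt hj)) x)
      (hπ k x a)) (hT k (Nat.lt_succ_self k) x a x')

lemma occ_sum' (ρ : X 0 → ℝ) (hρ : ∑ x : X 0, ρ x = 1) (T : ∀ k, X k → A → X (k+1) → ℝ)
    (π : ∀ k, X k → A → ℝ) (hπ : ∀ k (x : X k), ∑ a : A, π k x a = 1) :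
    ∀ k, (∀ j, j < k → ∀ (x : X j) (a : A), ∑ x' : X (j+1), T j x a x' = 1) →
      ∑ x : X k, occ ρ T π k x = 1
  | 0, _ => hρ
  | k + 1, hT => by
    have ih := occ_sum' ρ hρ T π hπ k (fun j hj => hT j (Nat.lt_succ_of_lt hj))
    calc ∑ x' : X (k+1), occ ρ T π (k+1) x'
        = ∑ x : X k, ∑ a : A, ∑ x' : X (k+1), occ ρ T π k x * π k x a * T k x a x' := by
          rw [show (∑ x' : X (k+1), occ ρ T π (k+1) x')
              = ∑ x' : X (k+1), ∑ x : X k, ∑ a : A, occ ρ T π k x * π k x a * T k x a x' from rfl]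
          rw [Finset.sum_comm]
          congr 1; ext x; rw [Finset.sum_comm]
      _ = ∑ x : X k, ∑ a : A, occ ρ T π k x * π k x a := by
          congr 1; ext x; congr 1; ext a
          rw [← Finset.mul_sum, hT k (Nat.lt_succ_self k) x a, mul_one]
      _ = ∑ x : X k, occ ρ T π k x := by
          congr 1; ext x
          rw [← Finset.mul_sum, hπ k x, mul_one]
      _ = 1 := ih

/-- (Barycentric spanners yield policy covers; the paper's Lemma D.1.)
Fix a layer `h` (paper layer `h+1 ∈ [H-1]`, so `h + 2 ≤ H`) in a finite low-rank MDP of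
dimension `d` satisfying `η`-reachability at the next layer.  If the expected feature
vectors of `π_1, …, π_d` form a `(C, ε)`-approximate barycentric spanner of
`{E^π[φ_h(x_h,a_h)] : π ∈ Π}` with `ε ≤ η/2`, then `{π_1, …, π_d}` is a
`(1/(2dC), 0)`-policy cover for the next layer. -/
theorem stmt_1 (H d : ℕ) (hd : 1 ≤ d) (h : ℕ) (hh : h + 2 ≤ H)
    (ρ : X 0 → ℝ) (hρ : IsInit ρ)
    (T : ∀ k, X k → A → X (k + 1) → ℝ)
    (hT : ∀ k, k + 2 ≤ H → ∀ (x : X k) (a : A),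
      (∀ x', 0 ≤ T k x a x') ∧ (∑ x', T k x a x' = 1))
    (φ : ∀ k, X k → A → EuclideanSpace ℝ (Fin d))
    (μ : ∀ k, X k → EuclideanSpace ℝ (Fin d))
    (hlow : ∀ k, k + 2 ≤ H → ∀ (x : X k) (a : A) (x' : X (k + 1)),
      T k x a x' = ⟪μ (k + 1) x', φ k x a⟫)
    (η : ℝ) (hη : 0 < η)
    (hreach : ∀ x : X (h + 1),
      η * ‖μ (h + 1) x‖ ≤
        ⨆ π' : {π' : ∀ k, X k → A → ℝ // IsPolicy π'}, occ ρ T π'.1 (h + 1) x)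
    (C ε : ℝ) (hC : 0 < C) (hε : 0 ≤ ε ∧ ε ≤ η / 2)
    (πs : Fin d → ∀ k, X k → A → ℝ) (hπs : ∀ i, IsPolicy (πs i))
    (hspan : ∀ π, IsPolicy π → ∃ β : Fin d → ℝ, (∀ i, |β i| ≤ C) ∧
      ‖featMean d ρ T φ π h - ∑ i, β i • featMean d ρ T φ (πs i) h‖ ≤ ε) :
    ∀ x : X (h + 1),
      1 / (2 * d * C) *
          (⨆ π' : {π' : ∀ k, X k → A → ℝ // IsPolicy π'}, occ ρ T π'.1 (h + 1) x) ≤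
        ⨆ i : Fin d, occ ρ T (πs i) (h + 1) x := by
  intro x
  have hdpos : (0:ℝ) < d := by exact_mod_cast hd
  have hTnn : ∀ j, j < h + 1 → ∀ (y : X j) (a : A) (x' : X (j+1)), 0 ≤ T j y a x' :=
    fun j hj y a x' => (hT j (by omega) y a).1 x'
  have hTsum : ∀ j, j < h + 1 → ∀ (y : X j) (a : A), ∑ x' : X (j+1), T j y a x' = 1 :=
    fun j hj y a => (hT j (by omega) y a).2
  -- occ at layer h+1 in [0,1] for any policy
  have hocc01 : ∀ π, IsPolicy π → 0 ≤ occ ρ T π (h+1) x ∧ occ ρ T π (h+1) x ≤ 1 := by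
    intro π hπ
    have hnn := occ_nonneg' ρ hρ.1 T π (fun k y a => (hπ k y).1 a) (h+1) hTnn
    have hsum := occ_sum' ρ hρ.2 T π (fun k y => (hπ k y).2) (h+1) hTsum
    refine ⟨hnn x, ?_⟩
    calc occ ρ T π (h+1) x ≤ ∑ y : X (h+1), occ ρ T π (h+1) y :=
          Finset.single_le_sum (fun y _ => hnn y) (Finset.mem_univ x)
      _ = 1 := hsum
  -- key identity: occ = ⟪μ x, featMean⟫
  have hkey : ∀ π : ∀ k, X k → A → ℝ,
      occ ρ T π (h+1) x = ⟪μ (h+1) x, featMean d ρ T φ π h⟫ := by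
    intro π
    show (∑ y : X h, ∑ a : A, occ ρ T π h y * π h y a * T h y a x) = _
    rw [featMean, inner_sum]
    congr 1; ext y
    rw [inner_sum]
    congr 1; ext a
    rw [real_inner_smul_right, hlow h hh y a x, mul_assoc]
  -- the two suprema
  set S := ⨆ π' : {π' : ∀ k, X k → A → ℝ // IsPolicy π'}, occ ρ T π'.1 (h+1) x with hS
  set M := ⨆ i : Fin d, occ ρ T (πs i) (h+1) x with hM
  have hne : Nonempty {π' : ∀ k, X k → A → ℝ // IsPolicy π'} :=
    ⟨⟨πs ⟨0, hd⟩, hπs _⟩⟩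
  have hbdd : BddAbove (Set.range fun π' : {π' : ∀ k, X k → A → ℝ // IsPolicy π'} =>
      occ ρ T π'.1 (h+1) x) := by
    refine ⟨1, ?_⟩
    rintro _ ⟨π', rfl⟩
    exact (hocc01 π'.1 π'.2).2
  have hMle : ∀ i, occ ρ T (πs i) (h+1) x ≤ M :=
    fun i => le_ciSup (f := fun i => occ ρ T (πs i) (h+1) x)
      (Set.Finite.bddAbove (Set.finite_range _)) i
  have hMnn : 0 ≤ M := le_trans (hocc01 (πs ⟨0, hd⟩) (hπs _)).1 (hMle ⟨0, hd⟩)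
  -- each policy's occupancy is ≤ d*C*M + S/2
  have hstep : ∀ π' : {π' : ∀ k, X k → A → ℝ // IsPolicy π'},
      occ ρ T π'.1 (h+1) x ≤ d * C * M + S / 2 := by
    rintro ⟨π, hπ⟩
    obtain ⟨β, hβ, hβnorm⟩ := hspan π hπ
    have h1 : occ ρ T π (h+1) x
        = ⟪μ (h+1) x, featMean d ρ T φ π h - ∑ i, β i • featMean d ρ T φ (πs i) h⟫
          + ∑ i, β i * occ ρ T (πs i) (h+1) x := by
      rw [inner_sub_right, inner_sum, hkey]
      simp only [real_inner_smul_right]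
      have : ∀ i, β i * ⟪μ (h+1) x, featMean d ρ T φ (πs i) h⟫
          = β i * occ ρ T (πs i) (h+1) x := fun i => by rw [hkey]
      rw [Finset.sum_congr rfl (fun i _ => this i)]
      ring
    have h2 : ⟪μ (h+1) x, featMean d ρ T φ π h - ∑ i, β i • featMean d ρ T φ (πs i) h⟫
        ≤ S / 2 := by
      calc _ ≤ ‖μ (h+1) x‖ * ‖featMean d ρ T φ π h - ∑ i, β i • featMean d ρ T φ (πs i) h‖ :=
            real_inner_le_norm _ _
        _ ≤ ‖μ (h+1) x‖ * ε := by
            exact mul_le_mul_of_nonneg_left hβnorm (norm_nonneg _)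
        _ ≤ ‖μ (h+1) x‖ * (η / 2) :=
            mul_le_mul_of_nonneg_left hε.2 (norm_nonneg _)
        _ = (η * ‖μ (h+1) x‖) / 2 := by ring
        _ ≤ S / 2 := by
            have := hreach x
            linarith
    have h3 : ∑ i, β i * occ ρ T (πs i) (h+1) x ≤ d * C * M := by
      calc ∑ i, β i * occ ρ T (πs i) (h+1) x
          ≤ ∑ i : Fin d, C * M := by
            apply Finset.sum_le_sum
            intro i _
            have hocci := hocc01 (πs i) (hπs i)
            calc β i * occ ρ T (πs i) (h+1) x
                ≤ C * occ ρ T (πs i) (h+1) x :=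
                  mul_le_mul_of_nonneg_right (le_trans (le_abs_self _) (hβ i)) hocci.1
              _ ≤ C * M := mul_le_mul_of_nonneg_left (hMle i) hC.le
        _ = d * (C * M) := by simp [Finset.sum_const, mul_comm]
        _ = d * C * M := by ring
    linarith
  have hSle : S ≤ d * C * M + S / 2 := ciSup_le hstep
  have hS2 : S / 2 ≤ d * C * M := by linarith
  rw [div_mul_eq_mul_div, div_le_iff₀ (by positivity)]
  calc 1 * S = S := one_mul S
    _ ≤ 2 * (d * C * M) := by linarith
    _ = M * (2 * d * C) := by ring
end

section
/- Let S be a nonempty finite set, K ∈ ℕ with K ≥ 1, C ≥ 1, B ≥ 0, and ε ≥ 0. Let ρ, q_1, …, q_K be probability distributions on S satisfying the coverability condition q_k(s) ≤ C·ρ(s) for all k ∈ [K] and s ∈ S. Let δ_1, …, δ_K : S → [−B, B] be functions such that for every k ∈ {2, …, K}, (1/(k−1))·Σ_{ℓ=1}^{k−1} Σ_{s∈S} q_ℓ(s)·δ_k(s)² ≤ ε². Then min_{k∈[K]} Σ_{s∈S} q_k(s)·δ_k(s) ≤ ε·√(2C·ln K) + 2CB/K. -/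
/-!
Let `P k s = ∑_{ℓ < k} q ℓ s` be the mass that has reached `s` before round `k`. While
`P k s ≤ C ρ s` (burn-in) bound `q k s * δ k s` by `B q k s`; the burn-in rounds at `s` carry mass
at most `2 C ρ s`, since the last of them starts below `C ρ s` and adds at most `q ≤ C ρ s`.
After burn-in, Cauchy–Schwarz over all pairs `(k, s)` applied to `q δ = (q / √P) (√P δ)` leaves
`∑ P δ² = ∑_k ∑_{ℓ < k} ∑_s q ℓ s δ_k(s)² ≤ K² ε²` and the potential sum `∑ q² / P`. Each of its
terms is at most `2 C ρ s (log (P + q) - log P)`, which telescopes to `2 C ρ s log K` because the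
total mass at `s` is at most `K C ρ s`. Hence `∑_k ∑_s q δ ≤ 2 C B + K ε √(2 C log K)`, and the
minimum over `k` is at most the average.
-/

open Finset Real

section PrefixSum

variable {ι M : Type*} [LinearOrder ι] [AddCommMonoid M]

def prefixSum (t : Finset ι) (v : ι → M) (k : ι) : M := ∑ j ∈ t with j < k, v j

theorem prefixSum_univ [Fintype ι] [LocallyFiniteOrderBot ι] (v : ι → M) (k : ι) :
    prefixSum univ v k = ∑ j ∈ Iio k, v j := by
  rw [prefixSum, filter_gt_eq_Iio]

theorem sum_prefixSum_insert_of_forall_lt {N : Type*} [AddCommMonoid N] {a : ι} {s : Finset ι}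
    (has : ∀ x ∈ s, x < a) (v : ι → M) (F : M → ι → N) :
    ∑ k ∈ insert a s, F (prefixSum (insert a s) v k) k =
      ∑ k ∈ s, F (prefixSum s v k) k + F (∑ j ∈ s, v j) a := by
  rw [sum_insert fun ha => lt_irrefl a (has a ha), add_comm]
  congr 1
  · refine sum_congr rfl fun k hk => ?_
    rw [prefixSum, filter_insert, if_neg (has k hk).not_gt, prefixSum]
  · rw [prefixSum, filter_insert, if_neg (lt_irrefl a), filter_true_of_mem has]

end PrefixSum

theorem ite_sq_div_le_two_mul_log_sub {P v c : ℝ} (hc : 0 < c) (hv : 0 ≤ v) (hvc : v ≤ c) :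
    (if c < P then v ^ 2 / P else 0) ≤ 2 * c * (log (max (v + P) c) - log (max P c)) := by
  split_ifs with hcP
  · have hP : 0 < P := hc.trans hcP
    rw [max_eq_left (by linarith), max_eq_left hcP.le]
    have hlog : v / (v + P) ≤ log (v + P) - log P := by
      rw [← log_div (by positivity) hP.ne']
      convert one_sub_inv_le_log_of_pos (x := (v + P) / P) (by positivity) using 1
      field_simp
      ring
    calc v ^ 2 / P ≤ 2 * c * v / (v + P) := by
          rw [div_le_div_iff₀ hP (by positivity)]
          -- `v² (v + P) ≤ c v (v + P) ≤ 2 c v P`, as `v ≤ c < P`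
          nlinarith [mul_nonneg (mul_nonneg (sub_nonneg.2 hvc) hv)
              (add_pos_of_nonneg_of_pos hv hP).le,
            mul_nonneg (mul_nonneg hc.le hv) (sub_nonneg.2 (hvc.trans hcP.le))]
      _ = 2 * c * (v / (v + P)) := by ring
      _ ≤ _ := by gcongr
  · have hmono : log (max P c) ≤ log (max (v + P) c) :=
      log_le_log (lt_max_of_lt_right hc) (max_le_max (by linarith) le_rfl)
    exact mul_nonneg (by linarith) (sub_nonneg.2 hmono)

section PrefixSumBounds

variable {ι : Type*} [LinearOrder ι] {v : ι → ℝ} {c : ℝ}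

theorem sum_ite_prefixSum_le_le (t : Finset ι) (hc : 0 ≤ c) (hv : ∀ i ∈ t, 0 ≤ v i)
    (hvc : ∀ i ∈ t, v i ≤ c) :
    ∑ k ∈ t, (if prefixSum t v k ≤ c then v k else 0) ≤ 2 * c := by
  induction t using Finset.induction_on_max with
  | empty => simp only [sum_empty]; linarith
  | insert a s has ih =>
    rw [sum_prefixSum_insert_of_forall_lt has v fun P k => if P ≤ c then v k else 0]
    split_ifs with hsc
    · have hburn : ∑ k ∈ s, (if prefixSum s v k ≤ c then v k else 0) ≤ ∑ k ∈ s, v k :=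
        sum_le_sum fun k hk => by
          split_ifs
          exacts [le_rfl, hv k (mem_insert_of_mem hk)]
      linarith [hvc a (mem_insert_self a s)]
    · simpa using ih (fun i hi => hv i (mem_insert_of_mem hi))
        (fun i hi => hvc i (mem_insert_of_mem hi))

theorem sum_ite_sq_div_prefixSum_le (t : Finset ι) (hc : 0 < c) (hv : ∀ i ∈ t, 0 ≤ v i)
    (hvc : ∀ i ∈ t, v i ≤ c) :
    ∑ k ∈ t, (if c < prefixSum t v k then v k ^ 2 / prefixSum t v k else 0) ≤
      2 * c * (log (max (∑ i ∈ t, v i) c) - log c) := by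
  induction t using Finset.induction_on_max with
  | empty => simp [hc.le]
  | insert a s has ih =>
    rw [sum_prefixSum_insert_of_forall_lt has v fun P k => if c < P then v k ^ 2 / P else 0,
      sum_insert fun ha => lt_irrefl a (has a ha)]
    have hs := ih (fun i hi => hv i (mem_insert_of_mem hi))
      (fun i hi => hvc i (mem_insert_of_mem hi))
    have ha := ite_sq_div_le_two_mul_log_sub (P := ∑ i ∈ s, v i) hc
      (hv a (mem_insert_self a s)) (hvc a (mem_insert_self a s))
    linarith

theorem sum_ite_sq_div_prefixSum_le_log_card (t : Finset ι) (hc : 0 ≤ c) (hv : ∀ i ∈ t, 0 ≤ v i)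
    (hvc : ∀ i ∈ t, v i ≤ c) :
    ∑ k ∈ t, (if c < prefixSum t v k then v k ^ 2 / prefixSum t v k else 0) ≤ 2 * c * log #t := by
  rcases hc.eq_or_lt with rfl | hc
  · have hv0 : ∀ i ∈ t, v i = 0 := fun i hi => le_antisymm (hvc i hi) (hv i hi)
    rw [sum_eq_zero fun k hk => by simp [hv0 k hk]]
    simp
  refine (sum_ite_sq_div_prefixSum_le t hc hv hvc).trans ?_
  gcongr
  rcases t.eq_empty_or_nonempty with rfl | ht
  · simp [hc.le]
  have hcard : (1 : ℝ) ≤ #t := by exact_mod_cast ht.card_pos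
  have hsum : ∑ i ∈ t, v i ≤ #t * c := by
    simpa using sum_le_card_nsmul t v c hvc
  rw [sub_le_iff_le_add, ← log_mul (by positivity) hc.ne']
  exact log_le_log (lt_max_of_lt_right hc) (max_le hsum (by nlinarith))

end PrefixSumBounds

theorem ciInf_le_sum_div_card {ι : Type*} [Fintype ι] [Nonempty ι] (f : ι → ℝ) :
    ⨅ i, f i ≤ (∑ i, f i) / Fintype.card ι := by
  rw [le_div_iff₀ (by exact_mod_cast Fintype.card_pos)]
  calc (⨅ i, f i) * Fintype.card ι = ∑ _i : ι, ⨅ j, f j := by simp [mul_comm]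
    _ ≤ ∑ i, f i := sum_le_sum fun i _ => ciInf_le (Finite.bddBelow_range f) i

theorem Real.sum_sum_sqrt_mul_sqrt_le {α β : Type*} (s : Finset α) (t : Finset β)
    {f g : α → β → ℝ} (hf : ∀ a b, 0 ≤ f a b) (hg : ∀ a b, 0 ≤ g a b) :
    ∑ a ∈ s, ∑ b ∈ t, √(f a b) * √(g a b) ≤
      √(∑ a ∈ s, ∑ b ∈ t, f a b) * √(∑ a ∈ s, ∑ b ∈ t, g a b) := by
  simpa only [sum_product] using
    sum_sqrt_mul_sqrt_le (s ×ˢ t) (f := fun x => f x.1 x.2) (g := fun x => g x.1 x.2)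
      (fun x => hf x.1 x.2) (fun x => hg x.1 x.2)

theorem sum_sum_le_of_forall_sum_le_mul {ι S : Type*} [Fintype ι] [Fintype S] {F : ι → S → ℝ}
    {ρ : S → ℝ} (hρ : ∑ s, ρ s = 1) {a : ℝ} (h : ∀ s, ∑ k, F k s ≤ a * ρ s) :
    ∑ k, ∑ s, F k s ≤ a :=
  calc ∑ k, ∑ s, F k s = ∑ s, ∑ k, F k s := sum_comm
    _ ≤ ∑ s, a * ρ s := sum_le_sum fun s _ => h s
    _ = a := by rw [← mul_sum, hρ, mul_one]

theorem mul_le_ite_add_sqrt_mul_sqrt {q δ B P c : ℝ} (hq : 0 ≤ q) (hδ : |δ| ≤ B) (hc : 0 ≤ c) :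
    q * δ ≤ B * (if P ≤ c then q else 0) + √(if c < P then q ^ 2 / P else 0) * √(P * δ ^ 2) := by
  by_cases hP : P ≤ c
  · simp only [if_pos hP, if_neg hP.not_gt, sqrt_zero, zero_mul, add_zero]
    nlinarith [le_abs_self δ]
  · have hP0 : 0 < P := by linarith
    rw [if_neg hP, if_pos (not_le.1 hP), mul_zero, zero_add, ← sqrt_mul (by positivity),
      show q ^ 2 / P * (P * δ ^ 2) = (q * δ) ^ 2 by field_simp, sqrt_sq_eq_abs]
    exact le_abs_self _

theorem sum_sum_mul_le_add_sqrt_mul_sqrt {ι S : Type*} [Fintype ι] [Fintype S]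
    {q δ P : ι → S → ℝ} {c : S → ℝ} {B β γ E : ℝ} (hB : 0 ≤ B) (hq : ∀ k s, 0 ≤ q k s)
    (hδ : ∀ k s, |δ k s| ≤ B) (hc : ∀ s, 0 ≤ c s) (hP : ∀ k s, 0 ≤ P k s)
    (hβ : ∑ k, ∑ s, (if P k s ≤ c s then q k s else 0) ≤ β)
    (hγ : ∑ k, ∑ s, (if c s < P k s then q k s ^ 2 / P k s else 0) ≤ γ)
    (hE : ∑ k, ∑ s, P k s * δ k s ^ 2 ≤ E) :
    ∑ k, ∑ s, q k s * δ k s ≤ B * β + √γ * √E :=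
  calc ∑ k, ∑ s, q k s * δ k s
      ≤ ∑ k, ∑ s, (B * (if P k s ≤ c s then q k s else 0) +
          √(if c s < P k s then q k s ^ 2 / P k s else 0) * √(P k s * δ k s ^ 2)) :=
        sum_le_sum fun k _ => sum_le_sum fun s _ =>
          mul_le_ite_add_sqrt_mul_sqrt (hq k s) (hδ k s) (hc s)
    _ = B * ∑ k, ∑ s, (if P k s ≤ c s then q k s else 0) + ∑ k, ∑ s,
          √(if c s < P k s then q k s ^ 2 / P k s else 0) * √(P k s * δ k s ^ 2) := by
        simp only [sum_add_distrib, mul_sum]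
    _ ≤ B * β + √(∑ k, ∑ s, (if c s < P k s then q k s ^ 2 / P k s else 0)) *
          √(∑ k, ∑ s, P k s * δ k s ^ 2) := by
        gcongr
        refine Real.sum_sum_sqrt_mul_sqrt_le _ _ (fun k s => ?_)
          (fun k s => mul_nonneg (hP k s) (sq_nonneg _))
        split_ifs
        exacts [div_nonneg (sq_nonneg _) (hP k s), le_rfl]
    _ ≤ B * β + √γ * √E := by gcongr

theorem sum_Iio_le_mul_of_avg_le {K : ℕ} {f : Fin K → Fin K → ℝ} {a : ℝ} (ha : 0 ≤ a)
    (havg : ∀ k : Fin K, 1 ≤ (k : ℕ) → (1 / (k : ℝ)) * ∑ ℓ ∈ Iio k, f ℓ k ≤ a) (k : Fin K) :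
    ∑ ℓ ∈ Iio k, f ℓ k ≤ K * a := by
  rcases Nat.eq_zero_or_pos k with hk | hk
  · rw [sum_eq_zero fun ℓ hℓ => absurd (Fin.lt_def.1 (mem_Iio.1 hℓ)) (by omega)]
    positivity
  · have hkK : (k : ℝ) ≤ K := by exact_mod_cast k.isLt.le
    have := havg k hk
    rw [one_div, inv_mul_le_iff₀ (by positivity)] at this
    nlinarith

theorem stmt_6_general {S : Type*} [Fintype S] (K : ℕ) (hK : 1 ≤ K)
    (C B ε : ℝ) (hC : 1 ≤ C) (hB : 0 ≤ B) (hε : 0 ≤ ε)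
    (ρ : S → ℝ) (hρ : (∀ s, 0 ≤ ρ s) ∧ ∑ s, ρ s = 1)
    (q : Fin K → S → ℝ) (hq : ∀ k, (∀ s, 0 ≤ q k s) ∧ ∑ s, q k s = 1)
    (hcover : ∀ k s, q k s ≤ C * ρ s)
    (δ : Fin K → S → ℝ) (hδ : ∀ k s, |δ k s| ≤ B)
    (havg : ∀ k : Fin K, 1 ≤ (k : ℕ) →
      (1 / (k : ℝ)) * ∑ ℓ ∈ Finset.Iio k, ∑ s, q ℓ s * (δ k s) ^ 2 ≤ ε ^ 2) :
    (⨅ k : Fin K, ∑ s, q k s * δ k s) ≤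
      ε * Real.sqrt (2 * C * Real.log K) + 2 * C * B / K := by
  have : Nonempty (Fin K) := ⟨⟨0, hK⟩⟩
  have hc : ∀ s, 0 ≤ C * ρ s := fun s => mul_nonneg (by linarith) (hρ.1 s)
  set P : Fin K → S → ℝ := fun k s => prefixSum univ (q · s) k with hP
  have hburn : ∑ k, ∑ s, (if P k s ≤ C * ρ s then q k s else 0) ≤ 2 * C :=
    sum_sum_le_of_forall_sum_le_mul hρ.2 fun s => by
      simpa [mul_assoc] using sum_ite_prefixSum_le_le univ (hc s) (fun k _ => (hq k).1 s)
        (fun k _ => hcover k s)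
  have hpotential : ∑ k, ∑ s, (if C * ρ s < P k s then q k s ^ 2 / P k s else 0) ≤
      2 * C * log K :=
    sum_sum_le_of_forall_sum_le_mul hρ.2 fun s => by
      simpa [mul_assoc, mul_comm (ρ s)] using sum_ite_sq_div_prefixSum_le_log_card univ (hc s)
        (fun k _ => (hq k).1 s) (fun k _ => hcover k s)
  have henergy : ∑ k, ∑ s, P k s * δ k s ^ 2 ≤ (K * ε) ^ 2 :=
    calc ∑ k, ∑ s, P k s * δ k s ^ 2 = ∑ k, ∑ ℓ ∈ Iio k, ∑ s, q ℓ s * δ k s ^ 2 := by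
          simp only [hP, prefixSum_univ, sum_mul]
          exact sum_congr rfl fun k _ => sum_comm
      _ ≤ ∑ _k : Fin K, (K : ℝ) * ε ^ 2 :=
          sum_le_sum fun k _ => sum_Iio_le_mul_of_avg_le (sq_nonneg ε) havg k
      _ = (K * ε) ^ 2 := by simp only [sum_const, card_univ, Fintype.card_fin, nsmul_eq_mul]; ring
  have htotal := sum_sum_mul_le_add_sqrt_mul_sqrt hB (fun k => (hq k).1) hδ hc
    (fun k s => sum_nonneg fun ℓ _ => (hq ℓ).1 s) hburn hpotential henergy
  have hK0 : (0 : ℝ) < K := by exact_mod_cast hK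
  calc (⨅ k : Fin K, ∑ s, q k s * δ k s) ≤ (∑ k, ∑ s, q k s * δ k s) / K := by
        simpa using ciInf_le_sum_div_card fun k : Fin K => ∑ s, q k s * δ k s
    _ ≤ (B * (2 * C) + √(2 * C * log K) * √((K * ε) ^ 2)) / K := by gcongr
    _ = ε * √(2 * C * log K) + 2 * C * B / K := by
        rw [sqrt_sq (by positivity)]
        field_simp
        ring

/-- (Distribution-shift / pigeonhole lemma.)  Let `S` be a nonempty finite
set and `ρ, q 0, …, q (K-1)` probability distributions on `S` with `q k s ≤ C * ρ s`
(coverability with constant `C ≥ 1`).  If functions `δ k : S → [-B, B]` satisfy the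
averaged on-policy guarantee
`(1/k') * Σ_{ℓ < k} Σ_s q ℓ s * (δ k s)² ≤ ε²` for every `k` with at least one predecessor
(`k'` being the number of predecessors), then
`min_k Σ_s q k s * δ k s ≤ ε √(2 C ln K) + 2 C B / K`. -/
theorem stmt_6 {S : Type*} [Fintype S] [Nonempty S] (K : ℕ) (hK : 1 ≤ K)
    (C B ε : ℝ) (hC : 1 ≤ C) (hB : 0 ≤ B) (hε : 0 ≤ ε)
    (ρ : S → ℝ) (hρ : (∀ s, 0 ≤ ρ s) ∧ ∑ s, ρ s = 1)
    (q : Fin K → S → ℝ) (hq : ∀ k, (∀ s, 0 ≤ q k s) ∧ ∑ s, q k s = 1)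
    (hcover : ∀ k s, q k s ≤ C * ρ s)
    (δ : Fin K → S → ℝ) (hδ : ∀ k s, |δ k s| ≤ B)
    (havg : ∀ k : Fin K, 1 ≤ (k : ℕ) →
      (1 / (k : ℝ)) * ∑ ℓ ∈ Finset.Iio k, ∑ s, q ℓ s * (δ k s) ^ 2 ≤ ε ^ 2) :
    (⨅ k : Fin K, ∑ s, q k s * δ k s) ≤
      ε * Real.sqrt (2 * C * Real.log K) + 2 * C * B / K :=
  stmt_6_general K hK C B ε hC hB hε ρ hρ q hq hcover δ hδ havg
end

section
/- Let d ∈ ℕ with d ≥ 1, let Z be a nonempty set, and let w : Z → ℝ^d satisfy ‖w(z)‖₂ ≤ 1 for all z ∈ Z. Then for every C > 1 and every ε ∈ (0, 1) there exist indices z_1, …, z_d ∈ Z such that for every z ∈ Z there are coefficients β_1, …, β_d ∈ [−C, C] with ‖w(z) − Σ_{i=1}^d β_i w(z_i)‖₂ ≤ (3/2)·C·d·ε. -/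
/-!
Let `V` be the span of the vectors `w z`, of dimension `m ≤ d`. In an orthonormal basis of `V`
the determinants of `m`-tuples of the `w z` are bounded by `m!`, so some tuple has volume more
than `1/C` times the supremum. By Cramer's rule the coefficient of `w z` on the `i`-th vector of
this tuple is the ratio of the volume of the tuple with `w z` in place `i` to the volume of the
tuple, hence at most `C` in absolute value. This represents every `w z` exactly; padding with
zero coefficients gives `d` vectors.
-/

open Function Module Set Submodule

def IsBarycentricSpanner {ι Z E : Type*} [Fintype ι] [AddCommMonoid E] [Module ℝ E]
    (C : ℝ) (v : Z → E) (t : ι → Z) : Prop :=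
  ∀ z, ∃ β : ι → ℝ, (∀ i, |β i| ≤ C) ∧ ∑ i, β i • v (t i) = v z

namespace IsBarycentricSpanner

variable {ι κ Z E F : Type*} [Fintype ι] [Fintype κ] [AddCommMonoid E] [Module ℝ E]
  [AddCommMonoid F] [Module ℝ F] {C : ℝ} {v : Z → E} {t : ι → Z}

theorem map (h : IsBarycentricSpanner C v t) (f : E →ₗ[ℝ] F) :
    IsBarycentricSpanner C (f ∘ v) t := fun z ↦ by
  obtain ⟨β, hβ, hsum⟩ := h z
  exact ⟨β, hβ, by simp [← hsum, map_sum]⟩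

theorem exists_extend [Nonempty Z] (h : IsBarycentricSpanner C v t) (hC : 0 ≤ C) (e : ι ↪ κ) :
    ∃ t' : κ → Z, IsBarycentricSpanner C v t' := by
  refine ⟨extend e t fun _ ↦ Classical.arbitrary Z, fun z ↦ ?_⟩
  obtain ⟨β, hβ, hsum⟩ := h z
  refine ⟨extend e β 0, fun k ↦ ?_, ?_⟩
  · by_cases hk : ∃ i, e i = k
    · obtain ⟨i, rfl⟩ := hk
      simpa [e.injective.extend_apply] using hβ i
    · simpa [extend_apply' _ _ _ hk] using hC
  · rw [← hsum]
    refine (Fintype.sum_of_injective e e.injective _ _ (fun k hk ↦ ?_) fun i ↦ ?_).symm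
    · simp [extend_apply' _ _ _ (by simpa using hk)]
    · simp [e.injective.extend_apply]

end IsBarycentricSpanner

section Determinant

variable {ι Z K E : Type*} [Fintype ι] [DecidableEq ι] [Field K] [AddCommGroup E] [Module K E]

theorem Module.Basis.exists_det_comp_ne_zero (b : Basis ι K E) {v : Z → E}
    (hv : ⊤ ≤ span K (range v)) : ∃ t : ι → Z, b.det (v ∘ t) ≠ 0 := by
  let B := Basis.ofSpan hv
  let e := b.indexEquiv B
  have : ∀ i, ∃ z, v z = B (e i) := fun i ↦ Basis.ofSpan_subset hv ⟨e i, rfl⟩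
  choose t ht using this
  have hB : v ∘ t = B.reindex e.symm := funext fun i ↦ by simp [ht]
  exact ⟨t, hB ▸ (b.isUnit_det _).ne_zero⟩

theorem Module.Basis.det_mul_mk_repr (b : Basis ι K E) {u : ι → E} (hli : LinearIndependent K u)
    (hsp : ⊤ ≤ span K (range u)) (x : E) (i : ι) :
    b.det u * (Basis.mk hli hsp).repr x i = b.det (update u i x) := by
  simpa using LinearMap.congr_fun (b.det_smul_mk_coord_eq_det_update hli hsp i) x

end Determinant

theorem OrthonormalBasis.abs_det_le {ι E : Type*} [Fintype ι] [DecidableEq ι]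
    [NormedAddCommGroup E] [InnerProductSpace ℝ E] (b : OrthonormalBasis ι ℝ E) {u : ι → E}
    (hu : ∀ i, ‖u i‖ ≤ 1) : |b.toBasis.det u| ≤ (Fintype.card ι).factorial := by
  have hentry : ∀ i j, |b.toBasis.toMatrix u i j| ≤ 1 := fun i j ↦ by
    rw [Basis.toMatrix_apply, b.coe_toBasis_repr_apply, ← Real.norm_eq_abs]
    exact (PiLp.norm_apply_le _ _).trans ((b.repr.norm_map _).trans_le (hu j))
  simpa [Basis.det_apply] using Matrix.det_le (abv := AbsoluteValue.abs) hentry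

section Spanner

variable {ι Z E : Type*} [Fintype ι] [DecidableEq ι] [AddCommGroup E] [Module ℝ E]
  {C : ℝ} {v : Z → E}

theorem Module.Basis.isBarycentricSpanner_of_abs_det_update_le (b : Basis ι ℝ E) {t : ι → Z}
    (ht : b.det (v ∘ t) ≠ 0) (h : ∀ z i, |b.det (v ∘ update t i z)| ≤ C * |b.det (v ∘ t)|) :
    IsBarycentricSpanner C v t := fun z ↦ by
  obtain ⟨hli, hsp⟩ := (b.is_basis_iff_det).mpr (isUnit_iff_ne_zero.mpr ht)
  let B := Basis.mk hli hsp.ge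
  refine ⟨B.repr (v z), fun i ↦ ?_, ?_⟩
  · have hcramer := b.det_mul_mk_repr hli hsp.ge (v z) i
    rw [← comp_update] at hcramer
    have := h z i
    rw [← hcramer, abs_mul, mul_comm C] at this
    exact le_of_mul_le_mul_left this (abs_pos.mpr ht)
  · simpa [B, Basis.mk_apply] using B.sum_repr (v z)

theorem Module.Basis.exists_isBarycentricSpanner (b : Basis ι ℝ E)
    (hv : ⊤ ≤ span ℝ (range v)) (hbdd : BddAbove (range fun t : ι → Z ↦ |b.det (v ∘ t)|))
    (hC : 1 < C) : ∃ t : ι → Z, IsBarycentricSpanner C v t := by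
  set M := ⨆ t : ι → Z, |b.det (v ∘ t)|
  obtain ⟨t₀, ht₀⟩ := b.exists_det_comp_ne_zero hv
  have : Nonempty (ι → Z) := ⟨t₀⟩
  have hM : 0 < M := (abs_pos.mpr ht₀).trans_le (le_ciSup hbdd t₀)
  obtain ⟨t, ht⟩ := exists_lt_of_lt_ciSup (div_lt_self hM hC)
  rw [div_lt_iff₀' (by linarith)] at ht
  refine ⟨t, b.isBarycentricSpanner_of_abs_det_update_le (fun h ↦ ?_) fun z i ↦ ?_⟩
  · rw [h, abs_zero, mul_zero] at ht
    linarith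
  · exact (le_ciSup hbdd _).trans ht.le

end Spanner

theorem stmt_7_general (d : ℕ) {Z : Type*} [Nonempty Z]
    (w : Z → EuclideanSpace ℝ (Fin d)) (hw : ∀ z, ‖w z‖ ≤ 1)
    (C : ℝ) (hC : 1 < C) (ε : ℝ) (hε : ε ∈ Set.Ioo (0 : ℝ) 1) :
    ∃ zs : Fin d → Z, ∀ z : Z, ∃ β : Fin d → ℝ,
      (∀ i, |β i| ≤ C) ∧ ‖w z - ∑ i, β i • w (zs i)‖ ≤ 3 / 2 * C * d * ε := by
  set V := span ℝ (range w)
  let v : Z → V := fun z ↦ ⟨w z, subset_span ⟨z, rfl⟩⟩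
  have hv : ⊤ ≤ span ℝ (range v) := by
    rw [← span_span_coe_preimage (s := range w)]
    exact span_mono fun x ⟨z, hz⟩ ↦ ⟨z, Subtype.ext hz⟩
  let b := stdOrthonormalBasis ℝ V
  have hbdd : BddAbove (range fun t ↦ |b.toBasis.det (v ∘ t)|) :=
    ⟨_, forall_mem_range.mpr fun t ↦ b.abs_det_le fun i ↦ hw (t i)⟩
  obtain ⟨t, ht⟩ := b.toBasis.exists_isBarycentricSpanner hv hbdd hC
  have hdim : finrank ℝ V ≤ d := (finrank_le V).trans_eq (finrank_euclideanSpace_fin)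
  obtain ⟨zs, hzs⟩ := (ht.map V.subtype).exists_extend (by linarith) (Fin.castLEEmb hdim)
  refine ⟨zs, fun z ↦ ?_⟩
  obtain ⟨β, hβ, hsum⟩ := hzs z
  refine ⟨β, hβ, ?_⟩
  have hε₀ := hε.1
  simp only [comp_apply, subtype_apply] at hsum
  rw [hsum, sub_self, norm_zero]
  positivity

/-- (Existence of approximate barycentric spanners, consequence of the
`RobustSpanner` guarantee.)  For any family `w : Z → ℝ^d` of vectors in the Euclidean unit
ball, any `C > 1` and any `ε ∈ (0,1)`, there are indices `z 1, …, z d ∈ Z` such that every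
`w z` is within Euclidean distance `(3/2)·C·d·ε` of a `[-C, C]`-combination of
`w (z 1), …, w (z d)`. -/
theorem stmt_7 (d : ℕ) (hd : 1 ≤ d) {Z : Type*} [Nonempty Z]
    (w : Z → EuclideanSpace ℝ (Fin d)) (hw : ∀ z, ‖w z‖ ≤ 1)
    (C : ℝ) (hC : 1 < C) (ε : ℝ) (hε : ε ∈ Set.Ioo (0 : ℝ) 1) :
    ∃ zs : Fin d → Z, ∀ z : Z, ∃ β : Fin d → ℝ,
      (∀ i, |β i| ≤ C) ∧ ‖w z - ∑ i, β i • w (zs i)‖ ≤ 3 / 2 * C * d * ε :=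
  stmt_7_general d w hw C hC ε hε
end

section
/- Let γ > 0 and let A, B ∈ ℝ^{d×d} be symmetric positive semidefinite matrices. Then log det(γ·I_d + A) − log det(γ·I_d + B) ≤ −Tr((γ·I_d + A)^{−1}·(B − A)) + ‖B − A‖_F² / (2γ²). -/
/-!
Put `Δ = B - A` and `M t = γ I + A + t Δ = γ I + (1 - t) A + t B`, so that `γ I ⪯ M t` for
`t ∈ [0, 1]`. By Jacobi's formula `(log det M)' t = Tr ((M t)⁻¹ Δ)`, and the resolvent identity
gives `Tr ((M 0)⁻¹ Δ) - Tr ((M t)⁻¹ Δ) = t Tr ((M 0)⁻¹ Δ (M t)⁻¹ Δ) ≤ t Tr (Δ²) / γ²`, because both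
inverses are `⪯ γ⁻¹ I`. Integrating this one-sided bound on the derivative over `[0, 1]` gives
the claim, with `Tr (Δ²) = ‖Δ‖_F²` as `Δ` is symmetric.
-/

open Matrix Polynomial Set
open scoped MatrixOrder ComplexOrder

namespace Matrix

section

variable {n 𝕜 : Type*} [Fintype n]

lemma trace_mul_transpose_self {m R : Type*} [Fintype m] [CommSemiring R] (A : Matrix n m R) :
    (A * Aᵀ).trace = ∑ i, ∑ j, A i j ^ 2 := by
  simp only [trace, diag_apply, mul_apply, transpose_apply, sq]

variable [DecidableEq n]

lemma trace_inv_mul_sub_trace_inv_add_smul_mul [Field 𝕜] {P Δ : Matrix n n 𝕜} {t : 𝕜}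
    (hP : IsUnit P.det) (hPt : IsUnit (P + t • Δ).det) :
    (P⁻¹ * Δ).trace - ((P + t • Δ)⁻¹ * Δ).trace = t * (P⁻¹ * Δ * (P + t • Δ)⁻¹ * Δ).trace := by
  have hunits : IsUnit P ↔ IsUnit (P + t • Δ) :=
    iff_of_true ((isUnit_iff_isUnit_det _).2 hP) ((isUnit_iff_isUnit_det _).2 hPt)
  rw [← trace_sub, ← Matrix.sub_mul, inv_sub_inv hunits, add_sub_cancel_left, Matrix.mul_smul,
    Matrix.smul_mul, Matrix.smul_mul, trace_smul, smul_eq_mul]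

variable [NontriviallyNormedField 𝕜]

lemma hasDerivAt_det_one_add_smul (N : Matrix n n 𝕜) :
    HasDerivAt (fun r : 𝕜 => (1 + r • N).det) N.trace 0 := by
  have hpoly : (fun r : 𝕜 => (1 + r • N).det) =
      fun r => (det (1 + (X : 𝕜[X]) • N.map C)).eval r := by
    funext r
    simp [eval_det, ← smul_eq_mul_diagonal]
  rw [hpoly, ← derivative_det_one_add_X_smul]
  exact Polynomial.hasDerivAt _ 0

lemma hasDerivAt_det_add_smul (P Δ : Matrix n n 𝕜) {s : 𝕜} (hs : IsUnit (P + s • Δ).det) :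
    HasDerivAt (fun t : 𝕜 => (P + t • Δ).det)
      ((P + s • Δ).det * ((P + s • Δ)⁻¹ * Δ).trace) s := by
  set M := P + s • Δ with hM
  have hfactor : ∀ t : 𝕜, (P + t • Δ).det = M.det * (1 + (t - s) • (M⁻¹ * Δ)).det := by
    intro t
    rw [← det_mul, Matrix.mul_add, Matrix.mul_one, Matrix.mul_smul, ← Matrix.mul_assoc,
      mul_nonsing_inv _ hs, Matrix.one_mul, sub_smul, hM]
    congr 1
    abel
  have h0 := hasDerivAt_det_one_add_smul (M⁻¹ * Δ)
  rw [← sub_self s] at h0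
  simpa only [hfactor] using (h0.comp_sub_const s s).const_mul M.det

end

lemma hasDerivAt_log_det_add_smul {n : Type*} [Fintype n] [DecidableEq n]
    (P Δ : Matrix n n ℝ) {s : ℝ} (hs : (P + s • Δ).det ≠ 0) :
    HasDerivAt (fun t : ℝ => Real.log (P + t • Δ).det) ((P + s • Δ)⁻¹ * Δ).trace s := by
  have := (hasDerivAt_det_add_smul P Δ hs.isUnit).log hs
  rwa [mul_div_cancel_left₀ _ hs] at this

section

variable {n 𝕜 : Type*} [DecidableEq n] [RCLike 𝕜]

lemma posDef_of_smul_one_le {γ : ℝ} (hγ : 0 < γ) {M : Matrix n n 𝕜} (h : γ • 1 ≤ M) :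
    M.PosDef := by
  simpa using (PosDef.one.smul hγ).add_posSemidef h

variable [Fintype n]

lemma trace_mul_nonneg_of_posSemidef {S T : Matrix n n 𝕜} (hS : S.PosSemidef)
    (hT : T.PosSemidef) : 0 ≤ (S * T).trace := by
  have hconj := hS.conjTranspose_mul_mul_same (CFC.sqrt T)
  rw [(CFC.sqrt_nonneg T).posSemidef.1] at hconj
  calc 0 ≤ (CFC.sqrt T * S * CFC.sqrt T).trace := hconj.trace_nonneg
    _ = (S * T).trace := by
      rw [trace_mul_comm, ← Matrix.mul_assoc, CFC.sqrt_mul_sqrt_self T hT.nonneg, trace_mul_comm]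

lemma trace_mul_le_trace_mul_of_le {X Y N : Matrix n n 𝕜} (hXY : X ≤ Y) (hN : N.PosSemidef) :
    (X * N).trace ≤ (Y * N).trace := by
  have := trace_mul_nonneg_of_posSemidef hXY hN
  rwa [Matrix.sub_mul, trace_sub, sub_nonneg] at this

lemma inv_le_smul_one_of_smul_one_le {γ : ℝ} (hγ : 0 < γ) {M : Matrix n n 𝕜} (h : γ • 1 ≤ M) :
    M⁻¹ ≤ γ⁻¹ • 1 := by
  have hM := posDef_of_smul_one_le hγ h
  set S := CFC.sqrt M
  have hS : IsUnit S.det :=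
    (isUnit_iff_isUnit_det S).1 <| (CFC.isUnit_sqrt_iff M hM.posSemidef.nonneg).2 hM.isUnit
  have hSS : S * S = M := CFC.sqrt_mul_sqrt_self M hM.posSemidef.nonneg
  have hstar : star S⁻¹ = S⁻¹ := by
    rw [star_eq_conjTranspose, conjTranspose_nonsing_inv, (CFC.sqrt_nonneg M).posSemidef.1]
  have hconj : γ • M⁻¹ ≤ 1 := by
    have := star_left_conjugate_le_conjugate h S⁻¹
    rwa [hstar, ← hSS, Matrix.mul_smul, Matrix.mul_one, Matrix.smul_mul, ← mul_inv_rev,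
      ← Matrix.mul_assoc, nonsing_inv_mul _ hS, Matrix.one_mul, mul_nonsing_inv _ hS, hSS] at this
  rw [le_iff] at hconj ⊢
  convert hconj.smul (inv_nonneg.2 hγ.le) using 1
  rw [smul_sub, smul_smul, inv_mul_cancel₀ hγ.ne', one_smul]

lemma trace_inv_mul_le {γ : ℝ} (hγ : 0 < γ) {M N : Matrix n n 𝕜} (hM : γ • 1 ≤ M)
    (hN : N.PosSemidef) : (M⁻¹ * N).trace ≤ γ⁻¹ • N.trace := by
  simpa using trace_mul_le_trace_mul_of_le (inv_le_smul_one_of_smul_one_le hγ hM) hN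

lemma trace_inv_mul_mul_inv_mul_le {γ : ℝ} (hγ : 0 < γ) {P M Δ : Matrix n n 𝕜}
    (hP : γ • 1 ≤ P) (hM : γ • 1 ≤ M) (hΔ : Δ.IsHermitian) :
    (P⁻¹ * Δ * M⁻¹ * Δ).trace ≤ (γ ^ 2)⁻¹ • (Δ * Δ).trace := by
  have hΔMΔ : (Δ * M⁻¹ * Δ).PosSemidef := by
    simpa only [hΔ.eq] using
      (posDef_of_smul_one_le hγ hM).inv.posSemidef.conjTranspose_mul_mul_same Δ
  have hΔΔ : (Δ * Δ).PosSemidef := by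
    simpa only [hΔ.eq] using posSemidef_conjTranspose_mul_self Δ
  calc (P⁻¹ * Δ * M⁻¹ * Δ).trace = (P⁻¹ * (Δ * M⁻¹ * Δ)).trace := by
        simp only [Matrix.mul_assoc]
    _ ≤ γ⁻¹ • (Δ * M⁻¹ * Δ).trace := trace_inv_mul_le hγ hP hΔMΔ
    _ = γ⁻¹ • (M⁻¹ * (Δ * Δ)).trace := by
        rw [Matrix.mul_assoc, trace_mul_comm, Matrix.mul_assoc]
    _ ≤ γ⁻¹ • γ⁻¹ • (Δ * Δ).trace := by
        gcongr
        exact trace_inv_mul_le hγ hM hΔΔ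
    _ = (γ ^ 2)⁻¹ • (Δ * Δ).trace := by rw [smul_smul, sq, mul_inv]

end

end Matrix

lemma sub_le_neg_deriv_add_half_of_deriv_sub_le {f f' : ℝ → ℝ} {K : ℝ}
    (hf : ∀ t ∈ Icc (0 : ℝ) 1, HasDerivAt f (f' t) t)
    (hf' : ∀ t ∈ Ioo (0 : ℝ) 1, f' 0 - f' t ≤ K * t) :
    f 0 - f 1 ≤ -f' 0 + K / 2 := by
  set g : ℝ → ℝ := fun t => f t - f' 0 * t + K / 2 * t ^ 2
  have hg : ∀ t ∈ Icc (0 : ℝ) 1, HasDerivAt g (f' t - f' 0 + K * t) t := fun t ht => by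
    refine (((hf t ht).sub ((hasDerivAt_id' t).const_mul (f' 0))).add
      ((hasDerivAt_pow 2 t).const_mul (K / 2))).congr_deriv ?_
    norm_num
    ring
  have hmono : MonotoneOn g (Icc 0 1) :=
    monotoneOn_of_hasDerivWithinAt_nonneg (convex_Icc 0 1)
      (fun t ht => (hg t ht).continuousAt.continuousWithinAt)
      (fun t ht => (hg t (interior_subset ht)).hasDerivWithinAt)
      (fun t ht => by rw [interior_Icc] at ht; linarith [hf' t ht])
  have := hmono (left_mem_Icc.2 zero_le_one) (right_mem_Icc.2 zero_le_one) zero_le_one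
  simp only [g] at this
  linarith

/-- (Smoothness of the log-determinant objective.)  For `γ > 0` and
symmetric positive semidefinite `A, B ∈ ℝ^{d×d}`,
`log det(γ I + A) − log det(γ I + B)
   ≤ −Tr((γ I + A)⁻¹ (B − A)) + ‖B − A‖_F² / (2 γ²)`,
where `‖M‖_F² = Σ_{i,j} M i j ^ 2` is the squared Frobenius norm. -/
theorem stmt_9 (d : ℕ) (γ : ℝ) (hγ : 0 < γ)
    (A B : Matrix (Fin d) (Fin d) ℝ) (hA : A.PosSemidef) (hB : B.PosSemidef) :
    Real.log (γ • (1 : Matrix (Fin d) (Fin d) ℝ) + A).det -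
        Real.log (γ • (1 : Matrix (Fin d) (Fin d) ℝ) + B).det ≤
      -((γ • (1 : Matrix (Fin d) (Fin d) ℝ) + A)⁻¹ * (B - A)).trace +
        (∑ i, ∑ j, ((B - A) i j) ^ 2) / (2 * γ ^ 2) := by
  set P : Matrix (Fin d) (Fin d) ℝ := γ • 1 + A
  set Δ := B - A
  have hΔ : Δ.IsHermitian := hB.1.sub hA.1
  have hseg : ∀ t ∈ Icc (0 : ℝ) 1, γ • 1 ≤ P + t • Δ := fun t ht => by
    rw [le_iff, show P + t • Δ - γ • 1 = (1 - t) • A + t • B by module]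
    exact (hA.smul (sub_nonneg.2 ht.2)).add (hB.smul ht.1)
  have hdet : ∀ t ∈ Icc (0 : ℝ) 1, (P + t • Δ).det ≠ 0 := fun t ht =>
    (posDef_of_smul_one_le hγ (hseg t ht)).det_pos.ne'
  have hP : γ • 1 ≤ P := by simpa using hseg 0 (left_mem_Icc.2 zero_le_one)
  have hPdet : P.det ≠ 0 := (posDef_of_smul_one_le hγ hP).det_pos.ne'
  have key := sub_le_neg_deriv_add_half_of_deriv_sub_le (K := (γ ^ 2)⁻¹ * (Δ * Δ).trace)
    (fun t ht => hasDerivAt_log_det_add_smul P Δ (hdet t ht)) fun t ht => by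
      have ht' := Ioo_subset_Icc_self ht
      rw [zero_smul, add_zero, mul_comm _ t,
        trace_inv_mul_sub_trace_inv_add_smul_mul hPdet.isUnit (hdet t ht').isUnit]
      exact mul_le_mul_of_nonneg_left
        (trace_inv_mul_mul_inv_mul_le hγ hP (hseg t ht') hΔ) ht.1.le
  have hfrob : (Δ * Δ).trace = ∑ i, ∑ j, Δ i j ^ 2 := by
    rw [← trace_mul_transpose_self, ← conjTranspose_eq_transpose_of_trivial, hΔ.eq]
  have hPΔ : P + Δ = γ • 1 + B := add_add_sub_cancel _ _ _
  simp only [zero_smul, add_zero, one_smul, hPΔ, hfrob] at key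
  refine key.trans_eq ?_
  ring
end

section
/- Fix h ∈ {2, …, H}, α ∈ (0, 1), and η > 0 in a finite low-rank MDP of dimension d satisfying the normalization assumptions. Let P be a finitely supported probability distribution over policies of the original MDP (viewed in the extended MDP as never taking the terminal action) that is an (α, η)-randomized policy cover relative to the truncated class Π̄_η for layer h in the extended MDP: E_{π∼P}[d̄^π(x)] ≥ α · max_{π'∈Π̄_η} d̄^{π'}(x) for every x ∈ X_h with max_{π'∈Π̄_η} d̄^{π'}(x) ≥ η·‖μ̄*_h(x)‖₂. Then P is an (α/2, ε)-randomized policy cover for layer h in the original MDP with ε := 4·H·d^{3/2}·η: E_{π∼P}[d^π(x)] ≥ (α/2) · max_{π'∈Π} d^{π'}(x) for every x ∈ X_h with max_{π'∈Π} d^{π'}(x) ≥ ε·‖μ*_h(x)‖₂. -/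
open scoped BigOperators RealInnerProductSpace

universe u v

variable {X : ℕ → Type u} {A : Type v} [∀ k, Fintype (X k)] [Fintype A] [DecidableEq A]

/-- Transition kernel of the extended MDP `M̄`: states `X k ⊕ Unit` (with `Sum.inr ()` the
terminal state `t_{k+1}`), actions `A ⊕ Unit` (with `Sum.inr ()` the terminal action `𝔞`).
The terminal action from any state, and any action from a terminal state, lead
deterministically to the next terminal state; all other transitions are as in `T`. -/
noncomputable def Tb (T : ∀ k, X k → A → X (k + 1) → ℝ) :
    ∀ k, (X k ⊕ Unit) → (A ⊕ Unit) → (X (k + 1) ⊕ Unit) → ℝ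
  | k, Sum.inl x, Sum.inl a, Sum.inl x' => T k x a x'
  | _, Sum.inl _, Sum.inl _, Sum.inr _ => 0
  | _, Sum.inl _, Sum.inr _, Sum.inl _ => 0
  | _, Sum.inl _, Sum.inr _, Sum.inr _ => 1
  | _, Sum.inr _, _, Sum.inl _ => 0
  | _, Sum.inr _, _, Sum.inr _ => 1

/-- Initial distribution of the extended MDP (terminal states have zero mass). -/
def ρb (ρ : X 0 → ℝ) : (X 0 ⊕ Unit) → ℝ := Sum.elim ρ fun _ => 0

/-- A Markov policy of the extended MDP; by convention it takes the terminal action at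
terminal states. -/
def IsExtPolicy (π : ∀ k, (X k ⊕ Unit) → (A ⊕ Unit) → ℝ) : Prop :=
  (∀ (k : ℕ) (x : X k ⊕ Unit), (∀ a, 0 ≤ π k x a) ∧ (∑ a, π k x a = 1)) ∧
  (∀ k : ℕ, π k (Sum.inr ()) (Sum.inr ()) = 1)

/-- Occupancy measure `d̄^π` in the extended MDP. -/
noncomputable def occb (ρ : X 0 → ℝ) (T : ∀ k, X k → A → X (k + 1) → ℝ)
    (π : ∀ k, (X k ⊕ Unit) → (A ⊕ Unit) → ℝ) (k : ℕ) (x : X k ⊕ Unit) : ℝ :=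
  occ (X := fun k => X k ⊕ Unit) (A := A ⊕ Unit) (ρb ρ) (Tb T) π k x

/-- Extended feature map `μ̄` in `ℝ^{d+1}`: `μ̄(x) = (μ(x), 0)` for original states and
`μ̄(t) = e_{d+1}` for terminal states. -/
noncomputable def muExt (d : ℕ) (μ : ∀ k, X k → EuclideanSpace ℝ (Fin d)) (k : ℕ) :
    (X k ⊕ Unit) → EuclideanSpace ℝ (Fin (d + 1))
  | Sum.inl x => WithLp.toLp 2 (fun i : Fin (d + 1) => if hi : (i : ℕ) < d then μ k x ⟨i, hi⟩ else 0)
  | Sum.inr _ => WithLp.toLp 2 (fun i : Fin (d + 1) => if (i : ℕ) = d then 1 else 0)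

/-- The `η`-reachable states at (0-indexed) layer `k` relative to a set `P` of extended
policies; by convention every state of layer `0` is reachable. -/
noncomputable def reachSet (d : ℕ) (ρ : X 0 → ℝ) (T : ∀ k, X k → A → X (k + 1) → ℝ)
    (μ : ∀ k, X k → EuclideanSpace ℝ (Fin d)) (η : ℝ)
    (P : Set (∀ k, (X k ⊕ Unit) → (A ⊕ Unit) → ℝ)) : ∀ k : ℕ, Set (X k)
  | 0 => Set.univ
  | k + 1 => {x | η * ‖muExt d μ (k + 1) (Sum.inl x)‖ ≤
      ⨆ π : P, occb ρ T π.1 (k + 1) (Sum.inl x)}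

/-- The truncated policy classes `Π̄_{n,η}`: `trunc … n` is the paper's `Π̄_{n,η}`, where the
truncation at stage `n + 1` replaces the action by the terminal action at every
(0-indexed) layer-`n` state that is not `η`-reachable relative to `Π̄_{n,η}`, leaving the
policy unchanged everywhere else.  `Π̄_η = trunc … H`. -/
noncomputable def trunc (d : ℕ) (ρ : X 0 → ℝ) (T : ∀ k, X k → A → X (k + 1) → ℝ)
    (μ : ∀ k, X k → EuclideanSpace ℝ (Fin d)) (η : ℝ) :
    ℕ → Set (∀ k, (X k ⊕ Unit) → (A ⊕ Unit) → ℝ)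
  | 0 => {π | IsExtPolicy π}
  | n + 1 => {π | ∃ π' ∈ trunc d ρ T μ η n,
      (∀ m, m ≠ n → π m = π' m) ∧
      (∀ x : X n, x ∈ reachSet d ρ T μ η (trunc d ρ T μ η n) n →
        π n (Sum.inl x) = π' n (Sum.inl x)) ∧
      (∀ x : X n, x ∉ reachSet d ρ T μ η (trunc d ρ T μ η n) n →
        ∀ a, π n (Sum.inl x) a = if a = Sum.inr () then 1 else 0) ∧
      π n (Sum.inr ()) = π' n (Sum.inr ())}

/-- A policy of the original MDP viewed as a policy of the extended MDP (it never takes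
the terminal action at original states). -/
def embed (π : ∀ k, X k → A → ℝ) : ∀ k, (X k ⊕ Unit) → (A ⊕ Unit) → ℝ
  | k, Sum.inl x, Sum.inl a => π k x a
  | _, Sum.inl _, Sum.inr _ => 0
  | _, Sum.inr _, Sum.inl _ => 0
  | _, Sum.inr _, Sum.inr _ => 1

/-!
Every policy `π` of the original MDP is turned into a member of `Π̄_η` by truncating it
layer after layer. Truncating at layer `n` diverts to the terminal states only the mass that
sits on non-reachable states `y`, each carrying less than `η ‖μ y‖`, hence at most
`2 d^{3/2} η` in total; through the low-rank transitions this diverted mass accounts for at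
most `2 d^{3/2} η ‖μ_h x‖` of the occupancy of any later state `x`. After `H` truncations,
`max_Π d^π(x) ≤ max_{Π̄_η} d̄^π(x) + 2 H d^{3/2} η ‖μ_h x‖`, so above the threshold
`4 H d^{3/2} η ‖μ_h x‖` the state `x` is `η`-reachable for `Π̄_η` and the `Π̄_η`-maximum is
at least half the `Π`-maximum; the cover property of `P` relative to `Π̄_η` concludes.
-/

set_option linter.unusedSectionVars false

open Finset

lemma EuclideanSpace.norm_le_sum_abs {d : ℕ} (v : EuclideanSpace ℝ (Fin d)) :
    ‖v‖ ≤ ∑ j, |v j| := by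
  conv_lhs => rw [← (EuclideanSpace.basisFun (Fin d) ℝ).sum_repr v]
  refine (norm_sum_le _ _).trans_eq ?_
  simp [norm_smul]

-- Split each coordinate sum `∑ i, |v i j|` along the sign of `v i j` and test the two
-- resulting `{0, 1}`-weights.
lemma sum_norm_le_of_norm_sum_smul_le {ι : Type*} [Fintype ι] {d : ℕ}
    (v : ι → EuclideanSpace ℝ (Fin d)) {B : ℝ}
    (hB : ∀ g : ι → ℝ, (∀ i, g i ∈ Set.Icc (0 : ℝ) 1) → ‖∑ i, g i • v i‖ ≤ B) :
    ∑ i, ‖v i‖ ≤ 2 * d * B := by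
  classical
  have hcoord_le : ∀ j, ∀ w : ι → ℝ, (∀ i, w i ∈ Set.Icc (0 : ℝ) 1) →
      |∑ i, w i * v i j| ≤ B := fun j w hw =>
    calc |∑ i, w i * v i j| = ‖(∑ i, w i • v i) j‖ := by simp
      _ ≤ ‖∑ i, w i • v i‖ := PiLp.norm_apply_le _ j
      _ ≤ B := hB w hw
  have hcoord : ∀ j, ∑ i, |v i j| ≤ 2 * B := by
    intro j
    let g : ι → ℝ := fun i => if 0 ≤ v i j then 1 else 0
    have hg : ∀ i, g i ∈ Set.Icc (0 : ℝ) 1 := fun i => by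
      simp only [g]; split_ifs <;> norm_num
    have hg' : ∀ i, 1 - g i ∈ Set.Icc (0 : ℝ) 1 := fun i => by
      simp only [g]; split_ifs <;> norm_num
    have habs : ∀ i, |v i j| = g i * v i j - (1 - g i) * v i j := fun i => by
      simp only [g]
      split_ifs with h
      · simp [abs_of_nonneg h]
      · simp [abs_of_neg (not_le.1 h)]
    calc ∑ i, |v i j| = ∑ i, g i * v i j - ∑ i, (1 - g i) * v i j := by
          rw [← sum_sub_distrib]; exact sum_congr rfl fun i _ => habs i
      _ ≤ 2 * B := by
          linarith [le_abs_self (∑ i, g i * v i j), neg_abs_le (∑ i, (1 - g i) * v i j),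
            hcoord_le j g hg, hcoord_le j _ hg']
  calc ∑ i, ‖v i‖ ≤ ∑ i, ∑ j, |v i j| := sum_le_sum fun i _ => (v i).norm_le_sum_abs
    _ = ∑ j, ∑ i, |v i j| := sum_comm
    _ ≤ ∑ _j : Fin d, 2 * B := sum_le_sum fun j _ => hcoord j
    _ = 2 * d * B := by
        simp only [sum_const, card_univ, Fintype.card_fin, nsmul_eq_mul]; ring

lemma rpow_three_halves {x : ℝ} (hx : 0 ≤ x) : x ^ ((3 : ℝ) / 2) = x * √x := by
  rw [show (3 : ℝ) / 2 = 1 + 1 / 2 by norm_num, Real.rpow_add' hx (by norm_num), Real.rpow_one,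
    Real.sqrt_eq_rpow]

lemma norm_muExt_inl {d : ℕ} (μ : ∀ k, X k → EuclideanSpace ℝ (Fin d)) (k : ℕ) (x : X k) :
    ‖muExt d μ k (Sum.inl x)‖ = ‖μ k x‖ := by
  simp [EuclideanSpace.norm_eq, muExt, Fin.sum_univ_castSucc]

section Extended

variable {ρ : X 0 → ℝ} {T : ∀ k, X k → A → X (k + 1) → ℝ}
  {σ : ∀ k, (X k ⊕ Unit) → (A ⊕ Unit) → ℝ}

def stepMeasure (T : ∀ k, X k → A → X (k + 1) → ℝ) (σ : ∀ k, (X k ⊕ Unit) → (A ⊕ Unit) → ℝ)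
    (k : ℕ) (c : X k → ℝ) (z : X (k + 1)) : ℝ :=
  ∑ y, ∑ a, c y * σ k (Sum.inl y) (Sum.inl a) * T k y a z

-- Terminal states, and the terminal action, never lead back to original states.
lemma occb_succ (σ : ∀ k, (X k ⊕ Unit) → (A ⊕ Unit) → ℝ) (k : ℕ) (z : X (k + 1)) :
    occb ρ T σ (k + 1) (Sum.inl z) =
      stepMeasure T σ k (fun y => occb ρ T σ k (Sum.inl y)) z := by
  simp [occb, occ, stepMeasure, Fintype.sum_sum_type, Tb]

lemma stepMeasure_add (k : ℕ) (c c' : X k → ℝ) (z : X (k + 1)) :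
    stepMeasure T σ k (fun y => c y + c' y) z =
      stepMeasure T σ k c z + stepMeasure T σ k c' z := by
  simp only [stepMeasure, add_mul, sum_add_distrib]

lemma IsExtPolicy.sum_inl_le_one (hσ : IsExtPolicy σ) (k : ℕ) (y : X k) :
    ∑ a : A, σ k (Sum.inl y) (Sum.inl a) ≤ 1 := by
  have h1 := (hσ.1 k (Sum.inl y)).2
  rw [Fintype.sum_sum_type] at h1
  have : 0 ≤ ∑ u : Unit, σ k (Sum.inl y) (Sum.inr u) := sum_nonneg fun u _ => (hσ.1 k _).1 _
  linarith

lemma stepMeasure_nonneg (hσ : IsExtPolicy σ) {k : ℕ} {c : X k → ℝ} (hc : ∀ y, 0 ≤ c y)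
    (hT : ∀ y a z, 0 ≤ T k y a z) (z : X (k + 1)) : 0 ≤ stepMeasure T σ k c z :=
  sum_nonneg fun y _ => sum_nonneg fun a _ =>
    mul_nonneg (mul_nonneg (hc y) ((hσ.1 k _).1 _)) (hT y a z)

lemma sum_stepMeasure_le (hσ : IsExtPolicy σ) {k : ℕ} {c : X k → ℝ} (hc : ∀ y, 0 ≤ c y)
    (hT : ∀ y a, ∑ z, T k y a z = 1) : ∑ z, stepMeasure T σ k c z ≤ ∑ y, c y := by
  calc ∑ z, stepMeasure T σ k c z
      = ∑ y, c y * ∑ a, σ k (Sum.inl y) (Sum.inl a) := by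
        simp only [stepMeasure, mul_sum]
        rw [sum_comm]
        refine sum_congr rfl fun y _ => ?_
        rw [sum_comm]
        simp only [← mul_sum, hT, mul_one]
    _ ≤ ∑ y, c y := sum_le_sum fun y _ => mul_le_of_le_one_right (hc y) (hσ.sum_inl_le_one k y)

lemma stepMeasure_le (hσ : IsExtPolicy σ) {k : ℕ} {c : X k → ℝ} (hc : ∀ y, 0 ≤ c y)
    {z : X (k + 1)} {b : ℝ} (hb : 0 ≤ b) (hT : ∀ y a, T k y a z ≤ b) :
    stepMeasure T σ k c z ≤ b * ∑ y, c y := by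
  calc stepMeasure T σ k c z
      ≤ ∑ y, ∑ a, c y * σ k (Sum.inl y) (Sum.inl a) * b :=
        sum_le_sum fun y _ => sum_le_sum fun a _ =>
          mul_le_mul_of_nonneg_left (hT y a) (mul_nonneg (hc y) ((hσ.1 k _).1 _))
    _ = ∑ y, b * (c y * ∑ a, σ k (Sum.inl y) (Sum.inl a)) := by
        simp only [mul_sum]
        exact sum_congr rfl fun y _ => sum_congr rfl fun a _ => by ring
    _ ≤ b * ∑ y, c y := by
        rw [mul_sum]
        exact sum_le_sum fun y _ => mul_le_mul_of_nonneg_left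
          (mul_le_of_le_one_right (hc y) (hσ.sum_inl_le_one k y)) hb

end Extended

section Occupancy

variable {ρ : X 0 → ℝ} {T : ∀ k, X k → A → X (k + 1) → ℝ}
  {σ σ' : ∀ k, (X k ⊕ Unit) → (A ⊕ Unit) → ℝ} {H : ℕ}

lemma occb_embed (π : ∀ k, X k → A → ℝ) (k : ℕ) (x : X k) :
    occb ρ T (embed π) k (Sum.inl x) = occ ρ T π k x := by
  induction k with
  | zero => rfl
  | succ k ih =>
    rw [occb_succ]
    simp only [stepMeasure, ih]
    rfl

lemma embed_isExtPolicy {π : ∀ k, X k → A → ℝ} (hπ : IsPolicy π) : IsExtPolicy (embed π) := by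
  refine ⟨fun k s => ?_, fun k => rfl⟩
  rcases s with x | u
  · refine ⟨fun a => ?_, ?_⟩
    · rcases a with a | a
      · exact (hπ k x).1 a
      · exact le_rfl
    · simpa [Fintype.sum_sum_type, embed] using (hπ k x).2
  · refine ⟨fun a => ?_, by simp [Fintype.sum_sum_type, embed]⟩
    rcases a with a | a <;> simp [embed]

lemma occb_congr {k : ℕ}
    (hσ : ∀ m < k, ∀ (y : X m) (a : A), σ m (Sum.inl y) (Sum.inl a) = σ' m (Sum.inl y) (Sum.inl a))
    (x : X k) : occb ρ T σ k (Sum.inl x) = occb ρ T σ' k (Sum.inl x) := by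
  induction k with
  | zero => rfl
  | succ k ih =>
    simp only [occb_succ, stepMeasure, ih fun m hm => hσ m (hm.trans k.lt_succ_self),
      hσ k k.lt_succ_self]

lemma occb_nonneg (hρ : IsInit ρ)
    (hT : ∀ k, k + 2 ≤ H → ∀ (x : X k) (a : A), (∀ x', 0 ≤ T k x a x') ∧ ∑ x', T k x a x' = 1)
    (hσ : IsExtPolicy σ) {k : ℕ} (hk : k + 1 ≤ H) (x : X k) : 0 ≤ occb ρ T σ k (Sum.inl x) := by
  induction k with
  | zero => exact hρ.1 x
  | succ k ih =>
    rw [occb_succ]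
    exact stepMeasure_nonneg hσ (ih (by omega)) (fun y a => (hT k hk y a).1) x

lemma sum_occb_le_one (hρ : IsInit ρ)
    (hT : ∀ k, k + 2 ≤ H → ∀ (x : X k) (a : A), (∀ x', 0 ≤ T k x a x') ∧ ∑ x', T k x a x' = 1)
    (hσ : IsExtPolicy σ) {k : ℕ} (hk : k + 1 ≤ H) : ∑ x : X k, occb ρ T σ k (Sum.inl x) ≤ 1 := by
  induction k with
  | zero => exact hρ.2.le
  | succ k ih =>
    simp only [occb_succ]
    exact (sum_stepMeasure_le hσ (occb_nonneg hρ hT hσ (by omega))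
      fun y a => (hT k hk y a).2).trans (ih (by omega))

lemma occb_le_one (hρ : IsInit ρ)
    (hT : ∀ k, k + 2 ≤ H → ∀ (x : X k) (a : A), (∀ x', 0 ≤ T k x a x') ∧ ∑ x', T k x a x' = 1)
    (hσ : IsExtPolicy σ) {k : ℕ} (hk : k + 1 ≤ H) (x : X k) : occb ρ T σ k (Sum.inl x) ≤ 1 :=
  (single_le_sum (fun y _ => occb_nonneg hρ hT hσ hk y) (mem_univ x)).trans
    (sum_occb_le_one hρ hT hσ hk)

end Occupancy

section Truncation

variable {σ : ∀ k, (X k ⊕ Unit) → (A ⊕ Unit) → ℝ} {n : ℕ} {R : Set (X n)}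

open Classical in
noncomputable def truncateAt (n : ℕ) (R : Set (X n)) (σ : ∀ k, (X k ⊕ Unit) → (A ⊕ Unit) → ℝ) :
    ∀ k, (X k ⊕ Unit) → (A ⊕ Unit) → ℝ :=
  Function.update σ n <| Sum.elim
    (fun x a => if x ∈ R then σ n (Sum.inl x) a else if a = Sum.inr () then 1 else 0)
    (σ n ∘ Sum.inr)

lemma truncateAt_of_ne {k : ℕ} (hk : k ≠ n) : truncateAt n R σ k = σ k :=
  Function.update_of_ne hk _ _

lemma truncateAt_inl_of_mem {x : X n} (hx : x ∈ R) :
    truncateAt n R σ n (Sum.inl x) = σ n (Sum.inl x) := by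
  simp [truncateAt, hx]

lemma truncateAt_inl_of_notMem {x : X n} (hx : x ∉ R) (a : A ⊕ Unit) :
    truncateAt n R σ n (Sum.inl x) a = if a = Sum.inr () then 1 else 0 := by
  simp [truncateAt, hx]

lemma truncateAt_inr (u : Unit) : truncateAt n R σ n (Sum.inr u) = σ n (Sum.inr u) := by
  simp [truncateAt]

lemma isExtPolicy_truncateAt (hσ : IsExtPolicy σ) : IsExtPolicy (truncateAt n R σ) := by
  refine ⟨fun k s => ?_, fun k => ?_⟩
  · rcases eq_or_ne k n with rfl | hk
    · rcases s with x | u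
      · by_cases hx : x ∈ R
        · rw [truncateAt_inl_of_mem hx]; exact hσ.1 k _
        · simp only [truncateAt_inl_of_notMem hx]
          refine ⟨fun a => by split_ifs <;> norm_num, ?_⟩
          simp
      · rw [truncateAt_inr]; exact hσ.1 k _
    · rw [truncateAt_of_ne hk]; exact hσ.1 k s
  · rcases eq_or_ne k n with rfl | hk
    · rw [truncateAt_inr]; exact hσ.2 k
    · rw [truncateAt_of_ne hk]; exact hσ.2 k

variable {d : ℕ} {ρ : X 0 → ℝ} {T : ∀ k, X k → A → X (k + 1) → ℝ}
  {μ : ∀ k, X k → EuclideanSpace ℝ (Fin d)} {η : ℝ}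

lemma trunc_succ (n : ℕ) : trunc d ρ T μ η (n + 1) =
    truncateAt n (reachSet d ρ T μ η (trunc d ρ T μ η n) n) '' trunc d ρ T μ η n := by
  ext σ
  constructor
  · rintro ⟨π, hπ, hne, hmem, hnotMem, hinr⟩
    refine ⟨π, hπ, funext fun k => ?_⟩
    rcases eq_or_ne k n with rfl | hk
    · funext s
      rcases s with x | u
      · by_cases hx : x ∈ reachSet d ρ T μ η (trunc d ρ T μ η k) k
        · rw [truncateAt_inl_of_mem hx, hmem x hx]
        · funext a; rw [truncateAt_inl_of_notMem hx, hnotMem x hx]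
      · rw [truncateAt_inr, hinr]
    · rw [truncateAt_of_ne hk, hne k hk]
  · rintro ⟨π, hπ, rfl⟩
    exact ⟨π, hπ, fun m hm => truncateAt_of_ne hm, fun x hx => truncateAt_inl_of_mem hx,
      fun x hx => truncateAt_inl_of_notMem hx, truncateAt_inr ()⟩

lemma truncateAt_mem_trunc (hσ : σ ∈ trunc d ρ T μ η n) :
    truncateAt n (reachSet d ρ T μ η (trunc d ρ T μ η n) n) σ ∈ trunc d ρ T μ η (n + 1) := by
  rw [trunc_succ]
  exact Set.mem_image_of_mem _ hσ

lemma isExtPolicy_of_mem_trunc {N : ℕ} (hσ : σ ∈ trunc d ρ T μ η N) : IsExtPolicy σ := by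
  induction N generalizing σ with
  | zero => exact hσ
  | succ N ih =>
    rw [trunc_succ] at hσ
    obtain ⟨π, hπ, rfl⟩ := hσ
    exact isExtPolicy_truncateAt (ih hπ)

end Truncation

section Deficit

variable {ρ : X 0 → ℝ} {T : ∀ k, X k → A → X (k + 1) → ℝ}
  {σ : ∀ k, (X k ⊕ Unit) → (A ⊕ Unit) → ℝ} {H n : ℕ}

def propagate (T : ∀ k, X k → A → X (k + 1) → ℝ) (σ : ∀ k, (X k ⊕ Unit) → (A ⊕ Unit) → ℝ)
    (n : ℕ) (c : X n → ℝ) : ∀ j, X (n + j) → ℝ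
  | 0 => c
  | j + 1 => stepMeasure T σ (n + j) (propagate T σ n c j)

lemma propagate_nonneg_and_sum_le
    (hT : ∀ k, k + 2 ≤ H → ∀ (x : X k) (a : A), (∀ x', 0 ≤ T k x a x') ∧ ∑ x', T k x a x' = 1)
    (hσ : IsExtPolicy σ) {c : X n → ℝ} (hc : ∀ y, 0 ≤ c y) {j : ℕ} (hj : n + j + 1 ≤ H) :
    (∀ z, 0 ≤ propagate T σ n c j z) ∧ ∑ z, propagate T σ n c j z ≤ ∑ y, c y := by
  induction j with
  | zero => exact ⟨hc, le_rfl⟩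
  | succ j ih =>
    obtain ⟨ih_nonneg, ih_sum⟩ := ih (by omega)
    exact ⟨stepMeasure_nonneg hσ ih_nonneg fun y a => (hT _ hj y a).1,
      (sum_stepMeasure_le hσ ih_nonneg fun y a => (hT _ hj y a).2).trans ih_sum⟩

-- Truncating at layer `n` loses exactly the mass that `σ` sends through the truncated
-- states, and that lost mass then evolves under `σ` alone.
lemma occb_eq_occb_truncateAt_add_propagate (R : Set (X n)) (j : ℕ) (z : X (n + j + 1)) :
    occb ρ T σ (n + j + 1) (Sum.inl z) =
      occb ρ T (truncateAt n R σ) (n + j + 1) (Sum.inl z) +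
        propagate T σ n (Rᶜ.indicator fun y => occb ρ T σ n (Sum.inl y)) (j + 1) z := by
  induction j with
  | zero =>
    have hbelow : ∀ y : X n,
        occb ρ T (truncateAt n R σ) n (Sum.inl y) = occb ρ T σ n (Sum.inl y) :=
      occb_congr fun m hm y a => by rw [truncateAt_of_ne hm.ne]
    simp only [occb_succ, hbelow, stepMeasure, propagate, Nat.add_zero]
    rw [← sum_add_distrib]
    refine sum_congr rfl fun y _ => ?_
    rw [← sum_add_distrib]
    refine sum_congr rfl fun a _ => ?_
    by_cases hy : y ∈ R
    · simp [truncateAt_inl_of_mem hy, hy]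
    · simp [truncateAt_inl_of_notMem hy, hy]
  | succ j ih =>
    have hlayer : truncateAt n R σ (n + j + 1) = σ (n + j + 1) := truncateAt_of_ne (by omega)
    change occb ρ T σ (n + j + 1 + 1) (Sum.inl z) =
      occb ρ T (truncateAt n R σ) (n + j + 1 + 1) (Sum.inl z) +
        stepMeasure T σ (n + j + 1)
          (propagate T σ n (Rᶜ.indicator fun y => occb ρ T σ n (Sum.inl y)) (j + 1)) z
    rw [occb_succ, funext ih, stepMeasure_add, occb_succ (truncateAt n R σ)]
    simp only [stepMeasure, hlayer]

end Deficit

section Transfer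

variable {H d : ℕ} {ρ : X 0 → ℝ} {T : ∀ k, X k → A → X (k + 1) → ℝ}
  {μ : ∀ k, X k → EuclideanSpace ℝ (Fin d)} {η B : ℝ}
  {σ : ∀ k, (X k ⊕ Unit) → (A ⊕ Unit) → ℝ} {n h : ℕ}

lemma occb_sub_occb_truncateAt_le (hρ : IsInit ρ)
    (hT : ∀ k, k + 2 ≤ H → ∀ (x : X k) (a : A), (∀ x', 0 ≤ T k x a x') ∧ ∑ x', T k x a x' = 1)
    (hTμ : ∀ k, k + 2 ≤ H → ∀ (y : X k) (a : A) (z : X (k + 1)), T k y a z ≤ ‖μ (k + 1) z‖)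
    (hσ : IsExtPolicy σ) (R : Set (X n)) (hnh : n < h) (hh : h + 1 ≤ H) (x : X h) :
    occb ρ T σ h (Sum.inl x) - occb ρ T (truncateAt n R σ) h (Sum.inl x) ≤
      ‖μ h x‖ * ∑ y, Rᶜ.indicator (fun y => occb ρ T σ n (Sum.inl y)) y := by
  obtain ⟨j, rfl⟩ := Nat.exists_eq_add_of_lt hnh
  have hc : ∀ y, 0 ≤ Rᶜ.indicator (fun y => occb ρ T σ n (Sum.inl y)) y :=
    Set.indicator_nonneg fun y _ => occb_nonneg hρ hT hσ (by omega) y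
  obtain ⟨hnonneg, hsum⟩ := propagate_nonneg_and_sum_le hT hσ hc (j := j) (by omega)
  rw [occb_eq_occb_truncateAt_add_propagate R j x, add_sub_cancel_left]
  exact (stepMeasure_le hσ hnonneg (norm_nonneg _) fun y a => hTμ _ (by omega) y a x).trans
    (mul_le_mul_of_nonneg_left hsum (norm_nonneg _))

lemma occb_le_iSup_trunc (hρ : IsInit ρ)
    (hT : ∀ k, k + 2 ≤ H → ∀ (x : X k) (a : A), (∀ x', 0 ≤ T k x a x') ∧ ∑ x', T k x a x' = 1)
    {N : ℕ} (hσ : σ ∈ trunc d ρ T μ η N) (hh : h + 1 ≤ H) (x : X h) :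
    occb ρ T σ h (Sum.inl x) ≤ ⨆ π : trunc d ρ T μ η N, occb ρ T π.1 h (Sum.inl x) :=
  le_ciSup (f := fun π : trunc d ρ T μ η N => occb ρ T π.1 h (Sum.inl x))
    ⟨1, by rintro _ ⟨π, rfl⟩; exact occb_le_one hρ hT (isExtPolicy_of_mem_trunc π.2) hh x⟩
    ⟨σ, hσ⟩

lemma sum_indicator_compl_reachSet_le (hρ : IsInit ρ)
    (hT : ∀ k, k + 2 ≤ H → ∀ (x : X k) (a : A), (∀ x', 0 ≤ T k x a x') ∧ ∑ x', T k x a x' = 1)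
    (hμsum : ∀ k, k + 2 ≤ H → ∑ y : X (k + 1), ‖μ (k + 1) y‖ ≤ B) (hB : 0 ≤ B) (hη : 0 ≤ η)
    (hσ : σ ∈ trunc d ρ T μ η n) (hn : n + 2 ≤ H) :
    ∑ y, (reachSet d ρ T μ η (trunc d ρ T μ η n) n)ᶜ.indicator
      (fun y => occb ρ T σ n (Sum.inl y)) y ≤ η * B := by
  rcases n with _ | m
  · simpa [reachSet] using mul_nonneg hη hB
  · calc _ ≤ ∑ y, η * ‖μ (m + 1) y‖ := sum_le_sum fun y _ => by
          refine Set.indicator_le' (g := fun y => η * ‖μ (m + 1) y‖) (fun y hy => ?_)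
            (fun y _ => mul_nonneg hη (norm_nonneg _)) y
          have hlt : ⨆ π : trunc d ρ T μ η (m + 1), occb ρ T π.1 (m + 1) (Sum.inl y) <
              η * ‖μ (m + 1) y‖ := by
            rw [← norm_muExt_inl]; exact lt_of_not_ge hy
          exact (occb_le_iSup_trunc hρ hT hσ (by omega) y).trans hlt.le
      _ ≤ η * B := by rw [← mul_sum]; exact mul_le_mul_of_nonneg_left (hμsum m (by omega)) hη

lemma exists_mem_trunc_occ_le (hρ : IsInit ρ)
    (hT : ∀ k, k + 2 ≤ H → ∀ (x : X k) (a : A), (∀ x', 0 ≤ T k x a x') ∧ ∑ x', T k x a x' = 1)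
    (hTμ : ∀ k, k + 2 ≤ H → ∀ (y : X k) (a : A) (z : X (k + 1)), T k y a z ≤ ‖μ (k + 1) z‖)
    (hμsum : ∀ k, k + 2 ≤ H → ∑ y : X (k + 1), ‖μ (k + 1) y‖ ≤ B) (hB : 0 ≤ B) (hη : 0 ≤ η)
    {π : ∀ k, X k → A → ℝ} (hπ : IsPolicy π) (hh : h + 1 ≤ H) (x : X h) (N : ℕ) :
    ∃ σ ∈ trunc d ρ T μ η N,
      occ ρ T π h x ≤ occb ρ T σ h (Sum.inl x) + N * (‖μ h x‖ * (η * B)) := by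
  induction N with
  | zero => exact ⟨embed π, embed_isExtPolicy hπ, by simp [occb_embed]⟩
  | succ N ih =>
    obtain ⟨σ, hσ, hle⟩ := ih
    refine ⟨_, truncateAt_mem_trunc hσ, ?_⟩
    have hstep : occb ρ T σ h (Sum.inl x) ≤
        occb ρ T (truncateAt N (reachSet d ρ T μ η (trunc d ρ T μ η N) N) σ) h (Sum.inl x) +
          ‖μ h x‖ * (η * B) := by
      rcases lt_or_ge N h with hNh | hNh
      · have hdef := occb_sub_occb_truncateAt_le hρ hT hTμ (isExtPolicy_of_mem_trunc hσ)
          (reachSet d ρ T μ η (trunc d ρ T μ η N) N) hNh hh x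
        have hsum := sum_indicator_compl_reachSet_le hρ hT hμsum hB hη hσ (by omega)
        nlinarith [norm_nonneg (μ h x)]
      · have hsame : occb ρ T (truncateAt N (reachSet d ρ T μ η (trunc d ρ T μ η N) N) σ) h
            (Sum.inl x) = occb ρ T σ h (Sum.inl x) :=
          occb_congr (fun m hm y a => by rw [truncateAt_of_ne (by omega)]) x
        rw [hsame]
        exact le_add_of_nonneg_right (mul_nonneg (norm_nonneg _) (mul_nonneg hη hB))
    push_cast
    linarith

lemma iSup_occ_le_iSup_occb_trunc_add (hρ : IsInit ρ)
    (hT : ∀ k, k + 2 ≤ H → ∀ (x : X k) (a : A), (∀ x', 0 ≤ T k x a x') ∧ ∑ x', T k x a x' = 1)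
    (hTμ : ∀ k, k + 2 ≤ H → ∀ (y : X k) (a : A) (z : X (k + 1)), T k y a z ≤ ‖μ (k + 1) z‖)
    (hμsum : ∀ k, k + 2 ≤ H → ∑ y : X (k + 1), ‖μ (k + 1) y‖ ≤ B) (hB : 0 ≤ B) (hη : 0 ≤ η)
    (hh : h + 1 ≤ H) (x : X h) :
    ⨆ π : {π : ∀ k, X k → A → ℝ // IsPolicy π}, occ ρ T π.1 h x ≤
      (⨆ σ : trunc d ρ T μ η H, occb ρ T σ.1 h (Sum.inl x)) + H * (‖μ h x‖ * (η * B)) := by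
  refine Real.iSup_le (fun π => ?_) (add_nonneg ?_ ?_)
  · obtain ⟨σ, hσ, hle⟩ := exists_mem_trunc_occ_le hρ hT hTμ hμsum hB hη π.2 hh x H
    linarith [occb_le_iSup_trunc hρ hT hσ hh x]
  · exact Real.iSup_nonneg fun σ => occb_nonneg hρ hT (isExtPolicy_of_mem_trunc σ.2) hh x
  · exact mul_nonneg (Nat.cast_nonneg H) (mul_nonneg (norm_nonneg _) (mul_nonneg hη hB))

end Transfer

theorem stmt_13_general (H d : ℕ) (hd : 1 ≤ d)
    (h : ℕ) (hh2 : h + 1 ≤ H)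
    (α η : ℝ) (hα : α ∈ Set.Ioo (0 : ℝ) 1) (hη : 0 < η)
    (ρ : X 0 → ℝ) (hρ : IsInit ρ)
    (T : ∀ k, X k → A → X (k + 1) → ℝ)
    (hT : ∀ k, k + 2 ≤ H → ∀ (x : X k) (a : A),
      (∀ x', 0 ≤ T k x a x') ∧ (∑ x', T k x a x' = 1))
    (φ : ∀ k, X k → A → EuclideanSpace ℝ (Fin d))
    (μ : ∀ k, X k → EuclideanSpace ℝ (Fin d))
    (hlow : ∀ k, k + 2 ≤ H → ∀ (x : X k) (a : A) (x' : X (k + 1)),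
      T k x a x' = ⟪μ (k + 1) x', φ k x a⟫)
    (hφn : ∀ k, k + 2 ≤ H → ∀ (x : X k) (a : A), ‖φ k x a‖ ≤ 1)
    (hμn : ∀ k, k + 2 ≤ H → ∀ g : X (k + 1) → ℝ, (∀ x', g x' ∈ Set.Icc (0 : ℝ) 1) →
      ‖∑ x' : X (k + 1), g x' • μ (k + 1) x'‖ ≤ Real.sqrt d)
    (n : ℕ) (p : Fin n → ℝ) (πs : Fin n → ∀ k, X k → A → ℝ)
    (hcover : ∀ x : X h,
      η * ‖muExt d μ h (Sum.inl x)‖ ≤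
          (⨆ π' : trunc d ρ T μ η H, occb ρ T π'.1 h (Sum.inl x)) →
        α * (⨆ π' : trunc d ρ T μ η H, occb ρ T π'.1 h (Sum.inl x)) ≤
          ∑ i, p i * occb ρ T (embed (πs i)) h (Sum.inl x)) :
    ∀ x : X h,
      4 * H * (d : ℝ) ^ ((3 : ℝ) / 2) * η * ‖μ h x‖ ≤
          (⨆ π' : {π' : ∀ k, X k → A → ℝ // IsPolicy π'}, occ ρ T π'.1 h x) →
        α / 2 * (⨆ π' : {π' : ∀ k, X k → A → ℝ // IsPolicy π'}, occ ρ T π'.1 h x) ≤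
          ∑ i, p i * occ ρ T (πs i) h x := by
  intro x hx
  have hTμ : ∀ k, k + 2 ≤ H → ∀ (y : X k) (a : A) (z : X (k + 1)), T k y a z ≤ ‖μ (k + 1) z‖ :=
    fun k hk y a z => (hlow k hk y a z).trans_le <|
      (real_inner_le_norm _ _).trans (mul_le_of_le_one_right (norm_nonneg _) (hφn k hk y a))
  have hμsum : ∀ k, k + 2 ≤ H → ∑ y : X (k + 1), ‖μ (k + 1) y‖ ≤ 2 * d * √d :=
    fun k hk => sum_norm_le_of_norm_sum_smul_le _ (hμn k hk)
  have hS := iSup_occ_le_iSup_occb_trunc_add hρ hT hTμ hμsum (by positivity) hη.le hh2 x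
  set S := ⨆ π : {π : ∀ k, X k → A → ℝ // IsPolicy π}, occ ρ T π.1 h x
  set Sb := ⨆ σ : trunc d ρ T μ η H, occb ρ T σ.1 h (Sum.inl x)
  have hloss : 2 * (H * (‖μ h x‖ * (η * (2 * d * √d)))) ≤ S := by
    rw [rpow_three_halves (Nat.cast_nonneg d)] at hx; linarith
  have hHB : 1 ≤ (H : ℝ) * (2 * d * √d) := by
    have hd1 : (1 : ℝ) ≤ d := by exact_mod_cast hd
    exact one_le_mul_of_one_le_of_one_le (by exact_mod_cast (by omega : 1 ≤ H))
      (by nlinarith [Real.one_le_sqrt.2 hd1])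
  have hreach : η * ‖muExt d μ h (Sum.inl x)‖ ≤ Sb := by
    rw [norm_muExt_inl]
    nlinarith [mul_nonneg hη.le (norm_nonneg (μ h x))]
  calc α / 2 * S ≤ α / 2 * (2 * Sb) :=
        mul_le_mul_of_nonneg_left (by linarith) (by linarith [hα.1])
    _ = α * Sb := by ring
    _ ≤ _ := by simpa only [occb_embed] using hcover x hreach

/-- (Transfer from the extended MDP back to the original MDP; the
paper's Lemma B.1.)  Fix a layer `h` (paper layer `h+1 ∈ {2, …, H}`, so `1 ≤ h` and
`h + 1 ≤ H`), `α ∈ (0,1)` and `η > 0` in a finite low-rank MDP of dimension `d` satisfying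
the normalization assumptions.  If the finitely supported distribution `P` (weights `p`,
policies `πs` of the original MDP, embedded so that they never take the terminal action)
is an `(α, η)`-randomized policy cover relative to the truncated class `Π̄_η` for layer `h`
in the extended MDP, then `P` is an `(α/2, 4 H d^{3/2} η)`-randomized policy cover for
layer `h` in the original MDP. -/
theorem stmt_13 (H d : ℕ) (hd : 1 ≤ d) (hH : 2 ≤ H)
    (h : ℕ) (hh1 : 1 ≤ h) (hh2 : h + 1 ≤ H)
    (α η : ℝ) (hα : α ∈ Set.Ioo (0 : ℝ) 1) (hη : 0 < η)
    (ρ : X 0 → ℝ) (hρ : IsInit ρ)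
    (T : ∀ k, X k → A → X (k + 1) → ℝ)
    (hT : ∀ k, k + 2 ≤ H → ∀ (x : X k) (a : A),
      (∀ x', 0 ≤ T k x a x') ∧ (∑ x', T k x a x' = 1))
    (φ : ∀ k, X k → A → EuclideanSpace ℝ (Fin d))
    (μ : ∀ k, X k → EuclideanSpace ℝ (Fin d))
    (hlow : ∀ k, k + 2 ≤ H → ∀ (x : X k) (a : A) (x' : X (k + 1)),
      T k x a x' = ⟪μ (k + 1) x', φ k x a⟫)
    (hφn : ∀ k, k + 2 ≤ H → ∀ (x : X k) (a : A), ‖φ k x a‖ ≤ 1)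
    (hμn : ∀ k, k + 2 ≤ H → ∀ g : X (k + 1) → ℝ, (∀ x', g x' ∈ Set.Icc (0 : ℝ) 1) →
      ‖∑ x' : X (k + 1), g x' • μ (k + 1) x'‖ ≤ Real.sqrt d)
    (n : ℕ) (p : Fin n → ℝ) (πs : Fin n → ∀ k, X k → A → ℝ)
    (hp : (∀ i, 0 ≤ p i) ∧ (∑ i, p i = 1)) (hπs : ∀ i, IsPolicy (πs i))
    (hcover : ∀ x : X h,
      η * ‖muExt d μ h (Sum.inl x)‖ ≤
          (⨆ π' : trunc d ρ T μ η H, occb ρ T π'.1 h (Sum.inl x)) →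
        α * (⨆ π' : trunc d ρ T μ η H, occb ρ T π'.1 h (Sum.inl x)) ≤
          ∑ i, p i * occb ρ T (embed (πs i)) h (Sum.inl x)) :
    ∀ x : X h,
      4 * H * (d : ℝ) ^ ((3 : ℝ) / 2) * η * ‖μ h x‖ ≤
          (⨆ π' : {π' : ∀ k, X k → A → ℝ // IsPolicy π'}, occ ρ T π'.1 h x) →
        α / 2 * (⨆ π' : {π' : ∀ k, X k → A → ℝ // IsPolicy π'}, occ ρ T π'.1 h x) ≤
          ∑ i, p i * occ ρ T (πs i) h x :=
  stmt_13_general H d hd h hh2 α η hα hη ρ hρ T hT φ μ hlow hφn hμn n p πs hcover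
end
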